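/- arXiv:math/9903052 — 2 statements merged into one kernel-verified Lean document; each statement's English description precedes it below -/
import Mathlib

section
/- Define d_G: U(𝔤) ⊗ B → U(𝔤) ⊗ B as the linear map with d_G(u ⊗ b) = u ⊗ d(b) − ½ Σ_a (u_a·u + u·u_a) ⊗ ι_a(b) + (1/24) Σ_{a,b,c} f_{abc} u ⊗ (ι_a ι_b ι_c)(b). Then for every element ω ∈ U(𝔤) ⊗ B that is invariant — i.e. L^{tot}_a(ω) = 0 for all a, where L^{tot}_a(u ⊗ b) = (u_a·u − u·u_a) ⊗ b + u ⊗ L_a(b) — one has d_G(d_G(ω)) = 0. -/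
/-!
Abstractly, `d_G = d - ½ Y + (1/24) Z` with `Y = ∑ P_a ι_a`, `Z = ∑ f_abc ι_a ι_b ι_c`, where
`P_a = (u_a ·) + (· u_a)` acts on `U(𝔤)` and commutes with the operators on `B`. Squaring:
`d² = 0`; `Z² = 0` and `YZ + ZY = 0` since `Z` anticommutes with every `ι_a`;
`dY + Yd = ∑ P_a L_a` by Cartan's formula; `dZ + Zd = 3 ∑ f_abc ι_a ι_b L_c`, because the terms
quadratic in `f` are contractions of the symmetric tensor `∑ f_abc f_cad` against the
antisymmetric `ι_d ι_b`; and `2 Y² = ∑ f_abc ι_a ι_b M_c` with `M_c = (u_c ·) - (· u_c)`, from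
`[P_a, P_b] = ∑ f_abc M_c`. Since the Casimir `∑ u_a u_a` is central, `∑ P_a M_a = 0`, and
everything recombines into `d_G² = -½ ∑ P_a L^tot_a + ⅛ ∑ f_abc ι_a ι_b L^tot_c`, which kills
invariant elements.
-/

open scoped TensorProduct

structure TotallyAntisymmetric {κ K : Type*} [Ring K] (f : κ → κ → κ → K) : Prop where
  swap₁₂ : ∀ a b c, f b a c = -f a b c
  swap₂₃ : ∀ a b c, f a c b = -f a b c

section Sums

variable {κ M : Type*} [Fintype κ] [AddCommGroup M]

theorem Finset.sum_sum_eq_zero_of_antisymm [IsAddTorsionFree M] {F : κ → κ → M}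
    (hF : ∀ i j, F j i = -F i j) : ∑ i, ∑ j, F i j = 0 :=
  self_eq_neg.mp <| calc
    ∑ i, ∑ j, F i j = ∑ j, ∑ i, F i j := Finset.sum_comm
    _ = -∑ i, ∑ j, F i j := by simp only [← Finset.sum_neg_distrib, ← hF]

theorem Finset.sum_sum_sum_rotate (G : κ → κ → κ → M) :
    ∑ a, ∑ b, ∑ c, G b c a = ∑ a, ∑ b, ∑ c, G a b c :=
  Finset.sum_comm.trans (Fintype.sum_congr _ _ fun _ => Finset.sum_comm)

end Sums

namespace TotallyAntisymmetric

variable {κ K M : Type*} [Ring K] {f : κ → κ → κ → K}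

theorem cyclic (hf : TotallyAntisymmetric f) (a b c : κ) : f c a b = f a b c := by
  rw [hf.swap₁₂, hf.swap₂₃, neg_neg]

theorem swap₁₃ (hf : TotallyAntisymmetric f) (a b c : κ) : f c b a = -f a b c := by
  rw [hf.swap₁₂, hf.cyclic c a b, hf.cyclic a b c]

variable [Fintype κ] [AddCommGroup M] [Module K M]

theorem sum_smul_rotate (hf : TotallyAntisymmetric f) (G : κ → κ → κ → M) :
    ∑ a, ∑ b, ∑ c, f a b c • G a b c = ∑ a, ∑ b, ∑ c, f a b c • G b c a := by
  rw [← Finset.sum_sum_sum_rotate]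
  exact Fintype.sum_congr _ _ fun a => Fintype.sum_congr _ _ fun b =>
    Fintype.sum_congr _ _ fun c => by rw [hf.cyclic c a b, hf.cyclic a b c]

theorem sum_smul_swap₂₃ (hf : TotallyAntisymmetric f) (G : κ → κ → κ → M) :
    ∑ a, ∑ b, ∑ c, f a b c • G a b c = -∑ a, ∑ b, ∑ c, f a b c • G a c b := by
  simp only [← Finset.sum_neg_distrib, ← neg_smul]
  exact Fintype.sum_congr _ _ fun a => Finset.sum_comm.trans <| Fintype.sum_congr _ _ fun b =>
    Fintype.sum_congr _ _ fun c => by rw [hf.swap₂₃]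

end TotallyAntisymmetric

theorem mul_cube_eq_neg_of_anticomm {R κ : Type*} [Ring R] {ι : κ → R} {x : R}
    (hx : ∀ a, x * ι a = -(ι a * x)) (a b c : κ) :
    x * (ι a * ι b * ι c) = -(ι a * ι b * ι c * x) :=
  calc x * (ι a * ι b * ι c) = x * ι a * ι b * ι c := by noncomm_ring
    _ = -(ι a * (x * ι b) * ι c) := by rw [hx a]; noncomm_ring
    _ = ι a * ι b * (x * ι c) := by rw [hx b]; noncomm_ring
    _ = -(ι a * ι b * ι c * x) := by rw [hx c]; noncomm_ring

section CubicTerm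

variable {K R κ : Type*} [CommRing K] [Ring R] [Algebra K R] [Fintype κ]
  {f : κ → κ → κ → K} {ι L : κ → R} {d : R}

variable (f ι) in
def cubicTerm : R :=
  ∑ a, ∑ b, ∑ c, f a b c • (ι a * ι b * ι c)

theorem commute_cubicTerm {x : R} (hx : ∀ a, Commute x (ι a)) : Commute x (cubicTerm f ι) :=
  Commute.sum_right _ _ _ fun a _ => Commute.sum_right _ _ _ fun b _ =>
    Commute.sum_right _ _ _ fun c _ => (((hx a).mul_right (hx b)).mul_right (hx c)).smul_right _

theorem mul_cubicTerm_eq_neg_of_anticomm {x : R} (hx : ∀ a, x * ι a = -(ι a * x)) :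
    x * cubicTerm f ι = -(cubicTerm f ι * x) := by
  simp only [cubicTerm, Finset.mul_sum, Finset.sum_mul, mul_smul_comm, smul_mul_assoc,
    mul_cube_eq_neg_of_anticomm hx, smul_neg, Finset.sum_neg_distrib]

theorem ι_mul_cubicTerm (hι : ∀ a b, ι a * ι b + ι b * ι a = 0) (a : κ) :
    ι a * cubicTerm f ι = -(cubicTerm f ι * ι a) :=
  mul_cubicTerm_eq_neg_of_anticomm fun b => eq_neg_of_add_eq_zero_left (hι a b)

theorem cubicTerm_mul_self [IsAddTorsionFree R] (hι : ∀ a b, ι a * ι b + ι b * ι a = 0) :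
    cubicTerm f ι * cubicTerm f ι = 0 :=
  self_eq_neg.mp <| mul_cubicTerm_eq_neg_of_anticomm fun a => by
    rw [ι_mul_cubicTerm hι, neg_neg]

theorem sum_sum_smul_mul_eq_zero_of_symm [IsAddTorsionFree R]
    (hι : ∀ a b, ι a * ι b + ι b * ι a = 0) {m : κ → κ → K} (hm : ∀ a b, m b a = m a b) :
    ∑ a, ∑ b, m a b • (ι a * ι b) = 0 :=
  Finset.sum_sum_eq_zero_of_antisymm fun a b => by
    rw [hm, eq_neg_of_add_eq_zero_left (hι b a), smul_neg]

theorem sum_sum_smul_lie_ι (hLι : ∀ a b, L a * ι b - ι b * L a = ∑ c, f a b c • ι c) (b : κ) :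
    ∑ a, ∑ c, f a b c • (L c * ι a - ι a * L c) = ∑ e, (∑ a, ∑ c, f a b c * f c a e) • ι e := by
  simp only [hLι, Finset.smul_sum, smul_smul, Finset.sum_smul]
  exact (Finset.sum_sum_sum_rotate _).symm

theorem mul_cubicTerm_add_cubicTerm_mul [IsAddTorsionFree R] (hf : TotallyAntisymmetric f)
    (hι : ∀ a b, ι a * ι b + ι b * ι a = 0) (hcartan : ∀ a, d * ι a + ι a * d = L a)
    (hLι : ∀ a b, L a * ι b - ι b * L a = ∑ c, f a b c • ι c) :
    d * cubicTerm f ι + cubicTerm f ι * d =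
      (3 : K) • ∑ a, ∑ b, ∑ c, f a b c • (ι a * ι b * L c) := by
  have killing_symm : ∀ b e, ∑ a, ∑ c, f a e c * f c a b = ∑ a, ∑ c, f a b c * f c a e :=
    fun b e => Fintype.sum_congr _ _ fun a => Fintype.sum_congr _ _ fun c => by
      rw [← hf.cyclic a e c, hf.cyclic a b c, mul_comm]
  have lie_left : ∑ a, ∑ b, ∑ c, f a b c • ((L c * ι a - ι a * L c) * ι b) = 0 :=
    calc ∑ a, ∑ b, ∑ c, f a b c • ((L c * ι a - ι a * L c) * ι b)
        = ∑ b, (∑ a, ∑ c, f a b c • (L c * ι a - ι a * L c)) * ι b := by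
          rw [Finset.sum_comm]; simp only [Finset.sum_mul, smul_mul_assoc]
      _ = ∑ e, ∑ b, (∑ a, ∑ c, f a b c * f c a e) • (ι e * ι b) := by
          simp only [sum_sum_smul_lie_ι hLι, Finset.sum_mul, smul_mul_assoc]
          exact Finset.sum_comm
      _ = 0 := sum_sum_smul_mul_eq_zero_of_symm hι fun x y => killing_symm y x
  have lie_right : ∑ a, ∑ b, ∑ c, f a b c • (ι a * (L c * ι b - ι b * L c)) = 0 :=
    calc ∑ a, ∑ b, ∑ c, f a b c • (ι a * (L c * ι b - ι b * L c))
        = -∑ a, ι a * ∑ b, ∑ c, f b a c • (L c * ι b - ι b * L c) := by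
          rw [← Finset.sum_neg_distrib]
          refine Fintype.sum_congr _ _ fun a => ?_
          simp only [hf.swap₁₂ a, neg_smul, Finset.sum_neg_distrib, mul_neg, neg_neg,
            Finset.mul_sum, mul_smul_comm]
      _ = -∑ a, ∑ e, (∑ b, ∑ c, f b a c * f c b e) • (ι a * ι e) := by
          simp only [sum_sum_smul_lie_ι hLι, Finset.mul_sum, mul_smul_comm]
      _ = 0 := by rw [sum_sum_smul_mul_eq_zero_of_symm hι killing_symm, neg_zero]
  have expand : ∀ a b c, d * (ι a * ι b * ι c) + ι a * ι b * ι c * d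
      = L a * ι b * ι c - ι a * L b * ι c + ι a * ι b * L c := by
    intro a b c; simp only [← hcartan]; noncomm_ring
  have reorder : ∀ a b c, L c * ι a * ι b + ι a * L c * ι b + ι a * ι b * L c
      = ι a * ι b * L c + ι a * ι b * L c + ι a * ι b * L c + (L c * ι a - ι a * L c) * ι b
        + ι a * (L c * ι b - ι b * L c) + ι a * (L c * ι b - ι b * L c) := by
    intro a b c; noncomm_ring
  calc d * cubicTerm f ι + cubicTerm f ι * d
      = ∑ a, ∑ b, ∑ c, f a b c • (L a * ι b * ι c - ι a * L b * ι c + ι a * ι b * L c) := by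
        simp only [cubicTerm, Finset.mul_sum, Finset.sum_mul, mul_smul_comm, smul_mul_assoc,
          ← Finset.sum_add_distrib, ← smul_add, expand]
    _ = ∑ a, ∑ b, ∑ c, f a b c • (L c * ι a * ι b + ι a * L c * ι b + ι a * ι b * L c) := by
        simp only [smul_add, smul_sub, Finset.sum_add_distrib, Finset.sum_sub_distrib]
        rw [hf.sum_smul_rotate fun a b c => L a * ι b * ι c,
          hf.sum_smul_rotate fun a b c => L b * ι c * ι a,
          hf.sum_smul_swap₂₃ fun a b c => ι a * L b * ι c, sub_neg_eq_add]
    _ = (3 : K) • ∑ a, ∑ b, ∑ c, f a b c • (ι a * ι b * L c) := by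
        simp only [reorder, smul_add, Finset.sum_add_distrib, lie_left, lie_right]
        module

end CubicTerm

theorem two_smul_mul_self_sum_mul {K R κ : Type*} [CommRing K] [Ring R] [Algebra K R]
    [Fintype κ] {f : κ → κ → κ → K} {ι P M : κ → R} (hι : ∀ a b, ι a * ι b + ι b * ι a = 0)
    (hPι : ∀ a b, Commute (P a) (ι b)) (hMι : ∀ a b, Commute (M a) (ι b))
    (hPP : ∀ a b, P a * P b - P b * P a = ∑ c, f a b c • M c) :
    (2 : K) • ((∑ a, P a * ι a) * ∑ a, P a * ι a) =
      ∑ a, ∑ b, ∑ c, f a b c • (ι a * ι b * M c) := by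
  have expand : ∀ a b, P a * ι a * (P b * ι b) = P a * P b * (ι a * ι b) := fun a b => by
    rw [mul_assoc, ← mul_assoc (ι a), (hPι b a).symm.eq]; noncomm_ring
  have swap : (∑ a, P a * ι a) * ∑ a, P a * ι a = -∑ a, ∑ b, P b * P a * (ι a * ι b) := by
    rw [Finset.sum_mul_sum, Finset.sum_comm, ← Finset.sum_neg_distrib]
    refine Fintype.sum_congr _ _ fun a => ?_
    rw [← Finset.sum_neg_distrib]
    refine Fintype.sum_congr _ _ fun b => ?_
    rw [expand, eq_neg_of_add_eq_zero_left (hι b a), mul_neg]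
  calc (2 : K) • ((∑ a, P a * ι a) * ∑ a, P a * ι a)
      = ∑ a, ∑ b, (P a * P b - P b * P a) * (ι a * ι b) := by
        rw [two_smul]
        nth_rewrite 1 [Finset.sum_mul_sum]
        rw [swap, ← sub_eq_add_neg, ← Finset.sum_sub_distrib]
        simp only [expand, ← Finset.sum_sub_distrib, sub_mul]
    _ = ∑ a, ∑ b, ∑ c, f a b c • (ι a * ι b * M c) := by
        simp only [hPP, Finset.sum_mul, smul_mul_assoc,
          fun a b c => ((hMι c a).mul_right (hMι c b)).eq]

section CartanDifferential

variable {K R κ : Type*} [Field K] [Ring R] [Algebra K R] [Fintype κ]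

def cartanDifferential (f : κ → κ → κ → K) (d : R) (P ι : κ → R) : R :=
  d - (1 / 2 : K) • ∑ a, P a * ι a + (1 / 24 : K) • cubicTerm f ι

theorem cartanDifferential_mul_self [CharZero K] {f : κ → κ → κ → K} {ι L P M : κ → R} {d : R}
    (hf : TotallyAntisymmetric f) (hd : d * d = 0) (hι : ∀ a b, ι a * ι b + ι b * ι a = 0)
    (hcartan : ∀ a, d * ι a + ι a * d = L a)
    (hLι : ∀ a b, L a * ι b - ι b * L a = ∑ c, f a b c • ι c)
    (hPι : ∀ a b, Commute (P a) (ι b)) (hPd : ∀ a, Commute (P a) d)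
    (hMι : ∀ a b, Commute (M a) (ι b))
    (hPP : ∀ a b, P a * P b - P b * P a = ∑ c, f a b c • M c) (hPM : ∑ a, P a * M a = 0) :
    cartanDifferential f d P ι * cartanDifferential f d P ι =
      -(1 / 2 : K) • ∑ a, P a * (M a + L a)
        + (1 / 8 : K) • ∑ a, ∑ b, ∑ c, f a b c • (ι a * ι b * (M c + L c)) := by
  have : IsAddTorsionFree R := .of_isTorsionFree K R
  set Y := ∑ a, P a * ι a
  set C := cubicTerm f ι
  have hdY : d * Y + Y * d = ∑ a, P a * L a := by
    simp only [Y, Finset.mul_sum, Finset.sum_mul, ← Finset.sum_add_distrib, ← hcartan]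
    refine Fintype.sum_congr _ _ fun a => ?_
    rw [← mul_assoc, ← (hPd a).eq]; noncomm_ring
  have hYC : Y * C + C * Y = 0 := by
    simp only [Y, Finset.mul_sum, Finset.sum_mul, ← Finset.sum_add_distrib]
    refine Fintype.sum_eq_zero _ fun a => ?_
    rw [mul_assoc, ← mul_assoc C, ← (commute_cubicTerm (hPι a)).eq, mul_assoc, ← mul_add,
      ι_mul_cubicTerm hι, neg_add_cancel, mul_zero]
  have hD : cartanDifferential f d P ι * cartanDifferential f d P ι =
      d * d - (1 / 2 : K) • (d * Y + Y * d) + (1 / 24 : K) • (d * C + C * d)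
        + (1 / 4 : K) • (Y * Y) - (1 / 48 : K) • (Y * C + C * Y) + (1 / 576 : K) • (C * C) := by
    simp only [cartanDifferential, mul_add, add_mul, mul_sub, sub_mul, smul_mul_assoc,
      mul_smul_comm]
    module
  rw [hD, hd, hdY, mul_cubicTerm_add_cubicTerm_mul hf hι hcartan hLι, hYC, cubicTerm_mul_self hι]
  simp only [mul_add, smul_add, Finset.sum_add_distrib, hPM, zero_add]
  linear_combination (norm := module) (1 / 8 : K) • two_smul_mul_self_sum_mul hι hPι hMι hPP

end CartanDifferential

theorem LinearMap.BilinForm.totallyAntisymmetric_of_invariant {K g κ : Type*} [CommRing K]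
    [LieRing g] [LieAlgebra K g] {B : LinearMap.BilinForm K g}
    (hsymm : ∀ v w : g, B v w = B w v) (hinv : ∀ v w z : g, B ⁅v, w⁆ z + B w ⁅v, z⁆ = 0)
    {e : κ → g} {f : κ → κ → κ → K} (hf : ∀ a b c, f a b c = B ⁅e a, e b⁆ (e c)) :
    TotallyAntisymmetric f where
  swap₁₂ a b c := by rw [hf, hf, ← lie_skew, map_neg, LinearMap.neg_apply]
  swap₂₃ a b c := by rw [hf, hf, hsymm]; exact eq_neg_of_add_eq_zero_right (hinv _ _ _)

theorem LinearMap.BilinForm.sum_apply_smul_of_orthonormal {K M κ : Type*} [CommRing K]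
    [AddCommGroup M] [Module K M] [Fintype κ] [DecidableEq κ] {B : LinearMap.BilinForm K M}
    {e : Module.Basis κ K M} (he : ∀ a b, B (e a) (e b) = if a = b then 1 else 0) (v : M) :
    ∑ c, B v (e c) • e c = v := by
  have coeff : ∀ c, B v (e c) = e.repr v c := fun c =>
    calc B v (e c) = B (∑ i, e.repr v i • e i) (e c) := by rw [e.sum_repr]
      _ = e.repr v c := by simp [he, -Module.Basis.sum_repr]
  simp only [coeff, e.sum_repr]

namespace UniversalEnvelopingAlgebra

variable {K g κ : Type*} [CommRing K] [LieRing g] [LieAlgebra K g]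

theorem ι_mul_ι_sub_ι_mul_ι (x y : g) : ι K x * ι K y - ι K y * ι K x = ι K ⁅x, y⁆ := by
  let := LieRing.ofAssociativeRing (A := UniversalEnvelopingAlgebra K g)
  rw [← LieRing.of_associative_ring_bracket, LieHom.map_lie]

theorem commute_of_forall_commute_ι {z : UniversalEnvelopingAlgebra K g}
    (hz : ∀ x, Commute (ι K x) z) (y : UniversalEnvelopingAlgebra K g) : Commute y z := by
  obtain ⟨t, rfl⟩ : ∃ t, mkAlgHom K g t = y := RingCon.mkₐ_surjective (α := K) _ y
  induction t using TensorAlgebra.induction with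
  | algebraMap r => rw [AlgHom.commutes]; exact Algebra.commute_algebraMap_left r z
  | ι x => exact hz x
  | mul a b ha hb => rw [map_mul]; exact ha.mul_left hb
  | add a b ha hb => rw [map_add]; exact ha.add_left hb

theorem commute_of_forall_commute_ι_basis (e : Module.Basis κ K g)
    {z : UniversalEnvelopingAlgebra K g} (hz : ∀ i, Commute (ι K (e i)) z)
    (y : UniversalEnvelopingAlgebra K g) : Commute y z := by
  refine commute_of_forall_commute_ι (fun x => ?_) y
  induction e.mem_span x using Submodule.span_induction with
  | mem _ h => obtain ⟨i, rfl⟩ := h; exact hz i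
  | zero => rw [map_zero]; exact Commute.zero_left z
  | add _ _ _ _ h₁ h₂ => rw [map_add]; exact h₁.add_left h₂
  | smul r _ _ h => rw [map_smul]; exact h.smul_left r

end UniversalEnvelopingAlgebra

section Casimir

open LinearMap

variable {K A κ : Type*} [CommRing K] [Ring A] [Algebra K A] [Fintype κ]
  {f : κ → κ → κ → K} {u : κ → A}

theorem commute_sum_mul_self [IsAddTorsionFree A] (hf : TotallyAntisymmetric f)
    (hu : ∀ a b, u a * u b - u b * u a = ∑ c, f a b c • u c) (b : κ) :
    Commute (u b) (∑ a, u a * u a) := by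
  have term : ∀ a, u a * u a * u b - u b * (u a * u a)
      = ∑ c, f a b c • (u a * u c + u c * u a) := fun a =>
    calc u a * u a * u b - u b * (u a * u a)
        = u a * (u a * u b - u b * u a) + (u a * u b - u b * u a) * u a := by noncomm_ring
      _ = ∑ c, f a b c • (u a * u c + u c * u a) := by
        simp only [hu, Finset.mul_sum, Finset.sum_mul, mul_smul_comm, smul_mul_assoc,
          ← Finset.sum_add_distrib, smul_add]
  have vanish : ∑ a, (u a * u a * u b - u b * (u a * u a)) = 0 := by
    simp only [term]
    exact Finset.sum_sum_eq_zero_of_antisymm fun a c => by rw [hf.swap₁₃, neg_smul, add_comm]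
  rw [Finset.sum_sub_distrib, sub_eq_zero, ← Finset.sum_mul, ← Finset.mul_sum] at vanish
  exact vanish.symm

theorem mulLeft_add_mulRight_commutator
    (hu : ∀ a b, u a * u b - u b * u a = ∑ c, f a b c • u c) (a b : κ) :
    (mulLeft K (u a) + mulRight K (u a)) * (mulLeft K (u b) + mulRight K (u b))
      - (mulLeft K (u b) + mulRight K (u b)) * (mulLeft K (u a) + mulRight K (u a))
      = ∑ c, f a b c • (mulLeft K (u c) - mulRight K (u c)) := by
  ext z
  calc _ = (u a * u b - u b * u a) * z - z * (u a * u b - u b * u a) := by simp; noncomm_ring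
    _ = _ := by simp [hu, Finset.sum_mul, Finset.mul_sum, smul_sub]

theorem sum_mulLeft_add_mulRight_mul_mulLeft_sub_mulRight
    (hC : ∀ y, Commute y (∑ a, u a * u a)) :
    ∑ a, (mulLeft K (u a) + mulRight K (u a)) * (mulLeft K (u a) - mulRight K (u a)) = 0 := by
  ext z
  calc _ = (∑ a, u a * u a) * z - z * ∑ a, u a * u a := by
        simp only [Finset.sum_mul, Finset.mul_sum, ← Finset.sum_sub_distrib, LinearMap.sum_apply,
          Module.End.mul_apply, LinearMap.add_apply, LinearMap.sub_apply, mulLeft_apply,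
          mulRight_apply]
        exact Fintype.sum_congr _ _ fun a => by noncomm_ring
    _ = 0 := by rw [(hC z).eq, sub_self]

end Casimir

theorem LinearMap.commute_rTensor_lTensor {K M N : Type*} [CommSemiring K] [AddCommMonoid M]
    [Module K M] [AddCommMonoid N] [Module K N] (F : Module.End K M) (G : Module.End K N) :
    Commute (F.rTensor N) (G.lTensor M) :=
  (rTensor_comp_lTensor (f := F) (g := G)).trans (lTensor_comp_rTensor (f := F) (g := G)).symm

open LinearMap in
theorem cartanDifferential_sq_eq_zero_on_invariants {K A V κ : Type*} [Field K] [CharZero K]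
    [Ring A] [Algebra K A] [AddCommGroup V] [Module K V] [Fintype κ]
    {f : κ → κ → κ → K} (hf : TotallyAntisymmetric f) {u : κ → A}
    (hu : ∀ a b, u a * u b - u b * u a = ∑ c, f a b c • u c)
    (hC : ∀ y, Commute y (∑ a, u a * u a))
    {ιV LV : κ → Module.End K V} {dV : Module.End K V} (h_dd : dV * dV = 0)
    (h_ιι : ∀ a b, ιV a * ιV b + ιV b * ιV a = 0)
    (h_Cartan : ∀ a, dV * ιV a + ιV a * dV = LV a)
    (h_Lι : ∀ a b, LV a * ιV b - ιV b * LV a = ∑ c, f a b c • ιV c)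
    {dG : Module.End K (A ⊗[K] V)}
    (hdG : dG = TensorProduct.map LinearMap.id dV
      - (1 / 2 : K) • ∑ a, TensorProduct.map (mulLeft K (u a) + mulRight K (u a)) (ιV a)
      + (1 / 24 : K) • ∑ a, ∑ b, ∑ c, f a b c •
          TensorProduct.map LinearMap.id (ιV a * ιV b * ιV c))
    {Ltot : κ → Module.End K (A ⊗[K] V)}
    (hLtot : ∀ a, Ltot a = TensorProduct.map (mulLeft K (u a) - mulRight K (u a)) LinearMap.id
      + TensorProduct.map LinearMap.id (LV a))
    {ω : A ⊗[K] V} (hω : ∀ a, Ltot a ω = 0) : dG (dG ω) = 0 := by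
  set φ := Module.End.lTensorAlgHom K V A
  set ψ := Module.End.rTensorAlgHom K A V
  have hmap : ∀ F G, TensorProduct.map F G = ψ F * φ G := fun F G =>
    (rTensor_comp_lTensor (f := F) (g := G)).symm
  have hdG' : dG = cartanDifferential f (φ dV)
      (fun a => ψ (mulLeft K (u a) + mulRight K (u a))) (fun a => φ (ιV a)) := by
    simp only [hdG, cartanDifferential, cubicTerm, hmap, ← Module.End.one_eq_id, map_one, one_mul,
      map_mul]
  have hLtot' : ∀ a, ψ (mulLeft K (u a) - mulRight K (u a)) + φ (LV a) = Ltot a :=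
    fun a => (hLtot a).symm
  have key := cartanDifferential_mul_self (d := φ dV) (ι := fun a => φ (ιV a))
    (L := fun a => φ (LV a)) (P := fun a => ψ (mulLeft K (u a) + mulRight K (u a)))
    (M := fun a => ψ (mulLeft K (u a) - mulRight K (u a))) hf
    (by rw [← map_mul, h_dd, map_zero])
    (fun a b => by rw [← map_mul, ← map_mul, ← map_add, h_ιι, map_zero])
    (fun a => by rw [← map_mul, ← map_mul, ← map_add, h_Cartan])
    (fun a b => by rw [← map_mul, ← map_mul, ← map_sub φ, h_Lι, map_sum]; simp only [map_smul])
    (fun a b => commute_rTensor_lTensor _ _) (fun a => commute_rTensor_lTensor _ _)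
    (fun a b => commute_rTensor_lTensor _ _)
    (fun a b => by
      rw [← map_mul, ← map_mul, ← map_sub ψ, mulLeft_add_mulRight_commutator hu, map_sum]
      simp only [map_smul])
    (by simp only [← map_mul, ← map_sum, sum_mulLeft_add_mulRight_mul_mulLeft_sub_mulRight hC,
      map_zero])
  simp only [hLtot'] at key
  rw [← Module.End.mul_apply, hdG', key]
  simp only [LinearMap.add_apply, LinearMap.smul_apply, LinearMap.sum_apply, Module.End.mul_apply,
    hω, map_zero, smul_zero, Finset.sum_const_zero, add_zero]

theorem cartan_differential_squares_to_zero_on_invariants_general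
    {n : ℕ} {g : Type*} [LieRing g] [LieAlgebra ℝ g]
    -- the ad-invariant inner product, as a symmetric bilinear form
    (ip : LinearMap.BilinForm ℝ g)
    (ip_symm : ∀ v w : g, ip v w = ip w v)
    (ip_inv : ∀ v w z : g, ip ⁅v, w⁆ z + ip w ⁅v, z⁆ = 0)
    -- an orthonormal basis
    (e : Module.Basis (Fin n) ℝ g)
    (he : ∀ a b, ip (e a) (e b) = if a = b then (1 : ℝ) else 0)
    -- structure constants
    (f : Fin n → Fin n → Fin n → ℝ)
    (hf : ∀ a b c, f a b c = ip ⁅e a, e b⁆ (e c))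
    -- the generators of the universal enveloping algebra
    (u : Fin n → UniversalEnvelopingAlgebra ℝ g)
    (hu : ∀ a, u a = UniversalEnvelopingAlgebra.ι ℝ (e a))
    -- a G-differential space V
    {V : Type*} [AddCommGroup V] [Module ℝ V]
    (ιV LV : Fin n → Module.End ℝ V) (dV : Module.End ℝ V)
    (h_dd : dV * dV = 0)
    (h_ιι : ∀ a b, ιV a * ιV b + ιV b * ιV a = 0)
    (h_Cartan : ∀ a, dV * ιV a + ιV a * dV = LV a)
    (h_Lι : ∀ a b, LV a * ιV b - ιV b * LV a = ∑ c, f a b c • ιV c)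
    -- the non-commutative Cartan differential d_G on U(𝔤) ⊗ V
    (dG : Module.End ℝ (UniversalEnvelopingAlgebra ℝ g ⊗[ℝ] V))
    (hdG : dG = TensorProduct.map LinearMap.id dV
      - (1 / 2 : ℝ) • ∑ a, TensorProduct.map
          (LinearMap.mulLeft ℝ (u a) + LinearMap.mulRight ℝ (u a)) (ιV a)
      + (1 / 24 : ℝ) • ∑ a, ∑ b, ∑ c, f a b c •
          TensorProduct.map LinearMap.id (ιV a * ιV b * ιV c))
    -- the total Lie derivatives on U(𝔤) ⊗ V
    (Ltot : Fin n → Module.End ℝ (UniversalEnvelopingAlgebra ℝ g ⊗[ℝ] V))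
    (hLtot : ∀ a, Ltot a = TensorProduct.map
        (LinearMap.mulLeft ℝ (u a) - LinearMap.mulRight ℝ (u a)) LinearMap.id
      + TensorProduct.map LinearMap.id (LV a)) :
    ∀ ω : UniversalEnvelopingAlgebra ℝ g ⊗[ℝ] V,
      (∀ a, Ltot a ω = 0) → dG (dG ω) = 0 := by
  intro ω hω
  have hfa : TotallyAntisymmetric f := ip.totallyAntisymmetric_of_invariant ip_symm ip_inv hf
  have hu_comm : ∀ a b, u a * u b - u b * u a = ∑ c, f a b c • u c := fun a b => by
    rw [hu, hu, UniversalEnvelopingAlgebra.ι_mul_ι_sub_ι_mul_ι,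
      ← ip.sum_apply_smul_of_orthonormal he ⁅e a, e b⁆]
    simp [hf, hu]
  have : IsAddTorsionFree (UniversalEnvelopingAlgebra ℝ g) := .of_isTorsionFree ℝ _
  have hcasimir := UniversalEnvelopingAlgebra.commute_of_forall_commute_ι_basis e fun i =>
    hu i ▸ commute_sum_mul_self hfa hu_comm i
  exact cartanDifferential_sq_eq_zero_on_invariants hfa hu_comm hcasimir h_dd h_ιι h_Cartan h_Lι
    hdG hLtot hω

/-- For a `G`-differential space `V` (operators `ι_a, L_a, d` with the usual
relations), the non-commutative Cartan differential
`d_G(u ⊗ b) = u ⊗ d(b) − ½ ∑_a (u_a u + u u_a) ⊗ ι_a(b) + (1/24) ∑ f_{abc} u ⊗ ι_aι_bι_c(b)`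
on `U(𝔤) ⊗ V` squares to zero on invariant elements. -/
theorem cartan_differential_squares_to_zero_on_invariants
    {n : ℕ} {g : Type*} [LieRing g] [LieAlgebra ℝ g]
    -- the ad-invariant inner product, as a symmetric bilinear form
    (ip : LinearMap.BilinForm ℝ g)
    (ip_symm : ∀ v w : g, ip v w = ip w v)
    (ip_inv : ∀ v w z : g, ip ⁅v, w⁆ z + ip w ⁅v, z⁆ = 0)
    -- an orthonormal basis
    (e : Module.Basis (Fin n) ℝ g)
    (he : ∀ a b, ip (e a) (e b) = if a = b then (1 : ℝ) else 0)
    -- structure constants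
    (f : Fin n → Fin n → Fin n → ℝ)
    (hf : ∀ a b c, f a b c = ip ⁅e a, e b⁆ (e c))
    -- the generators of the universal enveloping algebra
    (u : Fin n → UniversalEnvelopingAlgebra ℝ g)
    (hu : ∀ a, u a = UniversalEnvelopingAlgebra.ι ℝ (e a))
    -- a G-differential space V
    {V : Type*} [AddCommGroup V] [Module ℝ V]
    (ιV LV : Fin n → Module.End ℝ V) (dV : Module.End ℝ V)
    (h_dd : dV * dV = 0)
    (h_ιι : ∀ a b, ιV a * ιV b + ιV b * ιV a = 0)
    (h_Cartan : ∀ a, dV * ιV a + ιV a * dV = LV a)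
    (h_Ld : ∀ a, LV a * dV = dV * LV a)
    (h_Lι : ∀ a b, LV a * ιV b - ιV b * LV a = ∑ c, f a b c • ιV c)
    (h_LL : ∀ a b, LV a * LV b - LV b * LV a = ∑ c, f a b c • LV c)
    -- the non-commutative Cartan differential d_G on U(𝔤) ⊗ V
    (dG : Module.End ℝ (UniversalEnvelopingAlgebra ℝ g ⊗[ℝ] V))
    (hdG : dG = TensorProduct.map LinearMap.id dV
      - (1 / 2 : ℝ) • ∑ a, TensorProduct.map
          (LinearMap.mulLeft ℝ (u a) + LinearMap.mulRight ℝ (u a)) (ιV a)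
      + (1 / 24 : ℝ) • ∑ a, ∑ b, ∑ c, f a b c •
          TensorProduct.map LinearMap.id (ιV a * ιV b * ιV c))
    -- the total Lie derivatives on U(𝔤) ⊗ V
    (Ltot : Fin n → Module.End ℝ (UniversalEnvelopingAlgebra ℝ g ⊗[ℝ] V))
    (hLtot : ∀ a, Ltot a = TensorProduct.map
        (LinearMap.mulLeft ℝ (u a) - LinearMap.mulRight ℝ (u a)) LinearMap.id
      + TensorProduct.map LinearMap.id (LV a)) :
    ∀ ω : UniversalEnvelopingAlgebra ℝ g ⊗[ℝ] V,
      (∀ a, Ltot a ω = 0) → dG (dG ω) = 0 :=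
  cartan_differential_squares_to_zero_on_invariants_general ip ip_symm ip_inv e he f hf u hu ιV LV
    dV h_dd h_ιι h_Cartan h_Lι dG hdG Ltot hLtot
end

section
/- (Non-commutative Kalkman/Mathai–Quillen conjugation identity.) Define N: Cl(𝔤) ⊗ B → Cl(𝔤) ⊗ B as the linear map with N(w ⊗ b) = Σ_a (x_a·ε(w)) ⊗ ι_a(b). Then N is nilpotent, so φ = exp(N) is a well-defined invertible linear map, and for every index a: φ ∘ I_a ∘ φ⁻¹ = J_a, where I_a is the total contraction I_a(w ⊗ b) = (x_a·w − ε(w)·x_a) ⊗ b + ε(w) ⊗ ι_a(b), and J_a(w ⊗ b) = (x_a·w − ε(w)·x_a) ⊗ b. -/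
/-!
Write `N = ∑_a T_a ⊗ ι_a` with `T_a w = x_a ε(w)`. Since the `ι_a` anticommute they factor
through the exterior algebra on `n` generators, so every word of length `n + 1` in them vanishes
and `N ^ (n + 1) = 0`. Write `I_a = J_a + K_a` with `K_a = ε ⊗ ι_a`. The Clifford relation
`x_a x_c + x_c x_a = δ_ac` gives `J_a N = N J_a + K_a`, and `K_a` commutes with `N` because
both tensor factors of each summand anticommute with those of `K_a`. Hence
`J_a N^(j+1) = N^(j+1) J_a + (j+1) K_a N^j`, which summed against `1/j!` says
`J_a exp N = exp N (J_a + K_a) = exp N I_a`.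
-/

open scoped TensorProduct

theorem List.prod_ofFn_eq_zero_of_anticommute {𝕜 A ι : Type*} [Field 𝕜] [NeZero (2 : 𝕜)]
    [Ring A] [Algebra 𝕜 A] (z : ι → A) (hz : ∀ a b, z a * z b + z b * z a = 0)
    {k : ℕ} (c : Fin k → ι) (hc : ¬ c.Injective) :
    (List.ofFn fun i => z (c i)).prod = 0 := by
  classical
  -- `z` extends to a linear map squaring to zero, hence to an algebra map out of the exterior
  -- algebra, where words with a repeated letter vanish.
  let f : (ι →₀ 𝕜) →ₗ[𝕜] A := Finsupp.linearCombination 𝕜 z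
  have hf : ∀ v, f v * f v = 0 := by
    intro v
    have hsum : f v * f v + f v * f v = 0 := by
      simp only [f, Finsupp.linearCombination_apply, Finsupp.sum, Finset.sum_mul,
        Finset.mul_sum, smul_mul_smul_comm]
      -- swap the indices in the second copy, pairing `z a * z b` with `z b * z a`
      conv_lhs => enter [2]; rw [Finset.sum_comm]
      rw [← Finset.sum_add_distrib]
      refine Finset.sum_eq_zero fun a _ => ?_
      rw [← Finset.sum_add_distrib]
      refine Finset.sum_eq_zero fun b _ => ?_
      rw [mul_comm (v b), ← smul_add, hz, smul_zero]
    rw [← two_smul 𝕜] at hsum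
    exact (smul_eq_zero.mp hsum).resolve_left two_ne_zero
  have hinj : ¬ (fun i => Finsupp.single (c i) (1 : 𝕜)).Injective :=
    fun h => hc fun i j hij => h (by simp only [hij])
  calc (List.ofFn fun i => z (c i)).prod
      = ExteriorAlgebra.lift 𝕜 ⟨f, hf⟩
          (ExteriorAlgebra.ιMulti 𝕜 k fun i => Finsupp.single (c i) 1) := by
        simp [ExteriorAlgebra.ιMulti_apply, map_list_prod, List.map_ofFn, Function.comp_def, f]
    _ = 0 := by rw [ExteriorAlgebra.ιMulti_eq_zero_of_not_inj hinj, map_zero]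

theorem pow_sum_eq_sum_prod_ofFn {R ι : Type*} [Semiring R] [Fintype ι] (M : ι → R) (k : ℕ) :
    (∑ a, M a) ^ k = ∑ c : Fin k → ι, (List.ofFn fun i => M (c i)).prod := by
  induction k with
  | zero => simp
  | succ k ih =>
    rw [pow_succ', ih, Finset.sum_mul_sum, ← Fintype.sum_prod_type',
      ← (Fin.consEquiv fun _ => ι).sum_comp]
    simp [Fin.consEquiv, List.ofFn_succ]

theorem TensorProduct.prod_ofFn_map {R M N : Type*} [CommSemiring R] [AddCommMonoid M]
    [AddCommMonoid N] [Module R M] [Module R N] {k : ℕ}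
    (f : Fin k → Module.End R M) (g : Fin k → Module.End R N) :
    (List.ofFn fun i => map (f i) (g i)).prod = map (List.ofFn f).prod (List.ofFn g).prod := by
  induction k with
  | zero => simp
  | succ k ih => simp [List.ofFn_succ, ih, TensorProduct.map_mul]

theorem TensorProduct.sum_map_pow_card_add_one_eq_zero {𝕜 M N ι : Type*} [Field 𝕜]
    [NeZero (2 : 𝕜)] [AddCommGroup M] [AddCommGroup N] [Module 𝕜 M] [Module 𝕜 N]
    [Fintype ι]
    (f : ι → Module.End 𝕜 M) (g : ι → Module.End 𝕜 N)
    (hg : ∀ a b, g a * g b + g b * g a = 0) :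
    (∑ a, map (f a) (g a)) ^ (Fintype.card ι + 1) = 0 := by
  rw [pow_sum_eq_sum_prod_ofFn]
  refine Finset.sum_eq_zero fun c _ => ?_
  have hc : ¬ c.Injective := fun h => by simpa using Fintype.card_le_of_injective c h
  rw [prod_ofFn_map, List.prod_ofFn_eq_zero_of_anticommute (𝕜 := 𝕜) g hg c hc, map_zero_right]

section TruncatedExp

open Finset Nat

variable (𝕜 : Type*) {R : Type*} [Field 𝕜] [Ring R] [Algebra 𝕜 R]

noncomputable def truncExp (N : R) (m : ℕ) : R :=
  ∑ j ∈ range m, ((j ! : 𝕜))⁻¹ • N ^ j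

variable {𝕜} {N : R} {m : ℕ}

theorem truncExp_succ_of_pow_eq_zero (hm : N ^ m = 0) :
    truncExp 𝕜 N (m + 1) = truncExp 𝕜 N m := by
  rw [truncExp, sum_range_succ, hm, smul_zero, add_zero, truncExp]

theorem isUnit_truncExp (hm : N ^ m = 0) : IsUnit (truncExp 𝕜 N m) := by
  have hN : IsNilpotent N := ⟨m, hm⟩
  rw [← truncExp_succ_of_pow_eq_zero hm, truncExp, sum_range_succ']
  simp only [factorial_zero, cast_one, inv_one, pow_zero, one_smul]
  refine Commute.isNilpotent_sum (fun j _ => (hN.pow_succ j).smul _) (fun i j _ _ => ?_)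
    |>.isUnit_add_one
  exact ((Commute.pow_pow_self N _ _).smul_left _).smul_right _

theorem mul_pow_succ_of_mul_eq_mul_add {A C : R} (hC : Commute C N) (hA : A * N = N * A + C)
    (j : ℕ) :
    A * N ^ (j + 1) = N ^ (j + 1) * A + (j + 1) • (C * N ^ j) := by
  induction j with
  | zero => simpa using hA
  | succ j ih =>
    calc A * N ^ (j + 2) = (A * N ^ (j + 1)) * N := by rw [pow_succ _ (j + 1), mul_assoc]
      _ = N ^ (j + 2) * A + (j + 2) • (C * N ^ (j + 1)) := by
        rw [ih, add_mul, mul_assoc, hA, smul_mul_assoc, mul_assoc, ← pow_succ,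
          mul_add, ← mul_assoc, ← pow_succ, (hC.pow_right (j + 1)).eq]
        simp only [add_smul, one_smul]
        abel

variable [CharZero 𝕜]

theorem mul_truncExp_succ {A C : R} (hC : Commute C N) (hA : A * N = N * A + C) (m : ℕ) :
    A * truncExp 𝕜 N (m + 1) = truncExp 𝕜 N (m + 1) * A + C * truncExp 𝕜 N m := by
  have hterm : ∀ j, (((j + 1) ! : 𝕜))⁻¹ • (A * N ^ (j + 1))
      = (((j + 1) ! : 𝕜))⁻¹ • (N ^ (j + 1) * A) + ((j ! : 𝕜))⁻¹ • (C * N ^ j) := by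
    intro j
    rw [mul_pow_succ_of_mul_eq_mul_add hC hA, smul_add, ← Nat.cast_smul_eq_nsmul 𝕜, smul_smul,
      factorial_succ, cast_mul, mul_inv, mul_right_comm,
      inv_mul_cancel₀ (cast_ne_zero.mpr j.succ_ne_zero), one_mul]
  simp only [truncExp, mul_sum, sum_mul, mul_smul_comm, smul_mul_assoc]
  rw [sum_range_succ', sum_range_succ' (fun j => _ • (N ^ j * A))]
  simp only [hterm, sum_add_distrib, pow_zero, mul_one, one_mul]
  abel

theorem truncExp_mul_add_eq_mul_truncExp {A C : R} (hC : Commute C N) (hA : A * N = N * A + C)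
    (hm : N ^ m = 0) : truncExp 𝕜 N m * (A + C) = A * truncExp 𝕜 N m := by
  have h := mul_truncExp_succ (𝕜 := 𝕜) hC hA m
  rw [truncExp_succ_of_pow_eq_zero hm] at h
  have hCS : Commute C (truncExp 𝕜 N m) :=
    Commute.sum_right _ _ _ fun j _ => (hC.pow_right j).smul_right _
  rw [h, mul_add, hCS.eq]

end TruncatedExp

theorem QuadraticMap.polar_eq_of_eq_half_mul_self {𝕜 M : Type*} [Field 𝕜] [NeZero (2 : 𝕜)]
    [AddCommGroup M] [Module 𝕜 M] {Q : QuadraticForm 𝕜 M} {ip : LinearMap.BilinForm 𝕜 M}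
    (hsymm : ∀ v w, ip v w = ip w v) (hQ : ∀ v, Q v = 1 / 2 * ip v v) (v w : M) :
    polar Q v w = ip v w := by
  simp only [polar, hQ, map_add, LinearMap.add_apply, hsymm w v]
  field_simp
  ring

namespace CliffordAlgebra

variable {R M B : Type*} [CommRing R] [AddCommGroup M] [Module R M] {Q : QuadraticForm R M}
  [AddCommGroup B] [Module R B]

/-- For odd `x` this is the graded commutator `w ↦ [x, w]`. -/
def oddCommutator (x : CliffordAlgebra Q) : Module.End R (CliffordAlgebra Q) :=
  LinearMap.mulLeft R x - (LinearMap.mulRight R x).comp involute.toLinearMap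

def twistedMulLeft (x : CliffordAlgebra Q) : Module.End R (CliffordAlgebra Q) :=
  (LinearMap.mulLeft R x).comp involute.toLinearMap

theorem oddCommutator_mul_twistedMulLeft (u v : M) :
    oddCommutator (ι Q u) * twistedMulLeft (ι Q v)
      = twistedMulLeft (ι Q v) * oddCommutator (ι Q u)
        + QuadraticMap.polar Q u v • involute.toLinearMap := by
  ext w
  simp only [oddCommutator, twistedMulLeft, Module.End.mul_apply, LinearMap.add_apply,
    LinearMap.sub_apply, LinearMap.comp_apply, LinearMap.mulLeft_apply, LinearMap.mulRight_apply,
    AlgHom.toLinearMap_apply, LinearMap.smul_apply, map_mul, map_sub, involute_ι,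
    involute_involute]
  rw [Algebra.smul_def, ← ι_mul_ι_add_swap u v]
  noncomm_ring

theorem commute_map_involute_map_twistedMulLeft (v : M) {f g : Module.End R B}
    (hfg : f * g + g * f = 0) :
    Commute (TensorProduct.map involute.toLinearMap f)
      (TensorProduct.map (twistedMulLeft (ι Q v)) g) := by
  have hfg' : ∀ b, f (g b) = -g (f b) := fun b =>
    eq_neg_of_add_eq_zero_left (LinearMap.congr_fun hfg b)
  refine TensorProduct.ext' fun w b => ?_
  simp [twistedMulLeft, hfg', TensorProduct.neg_tmul, TensorProduct.tmul_neg]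

variable {κ : Type*} [Fintype κ]

variable (Q) in
def kalkmanOperator (v : κ → M) (f : κ → Module.End R B) :
    Module.End R (CliffordAlgebra Q ⊗[R] B) :=
  ∑ a, TensorProduct.map (twistedMulLeft (ι Q (v a))) (f a)

theorem commute_map_involute_kalkmanOperator (v : κ → M) {f : κ → Module.End R B}
    (hf : ∀ a b, f a * f b + f b * f a = 0) (a : κ) :
    Commute (TensorProduct.map involute.toLinearMap (f a)) (kalkmanOperator Q v f) :=
  Commute.sum_right _ _ _ fun c _ => commute_map_involute_map_twistedMulLeft (v c) (hf a c)

theorem map_oddCommutator_mul_kalkmanOperator [DecidableEq κ] {v : κ → M}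
    (hv : ∀ a c, QuadraticMap.polar Q (v a) (v c) = if a = c then 1 else 0)
    (f : κ → Module.End R B) (a : κ) :
    TensorProduct.map (oddCommutator (ι Q (v a))) LinearMap.id * kalkmanOperator Q v f
      = kalkmanOperator Q v f * TensorProduct.map (oddCommutator (ι Q (v a))) LinearMap.id
        + TensorProduct.map involute.toLinearMap (f a) := by
  have hterm : ∀ c, TensorProduct.map (oddCommutator (ι Q (v a))) LinearMap.id
        * TensorProduct.map (twistedMulLeft (ι Q (v c))) (f c)
      = TensorProduct.map (twistedMulLeft (ι Q (v c))) (f c)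
          * TensorProduct.map (oddCommutator (ι Q (v a))) LinearMap.id
        + (if a = c then TensorProduct.map involute.toLinearMap (f c) else 0) := fun c => by
    rw [← TensorProduct.map_mul, ← TensorProduct.map_mul, ← Module.End.one_eq_id, one_mul,
      mul_one, oddCommutator_mul_twistedMulLeft, hv, TensorProduct.map_add_left,
      TensorProduct.map_smul_left, ite_smul, one_smul, zero_smul]
  simp only [kalkmanOperator, Finset.mul_sum, Finset.sum_mul, hterm, Finset.sum_add_distrib,
    Finset.sum_ite_eq, Finset.mem_univ, if_true]

end CliffordAlgebra

theorem CliffordAlgebra.kalkmanOperator_pow_card_add_one_eq_zero {𝕜 M B κ : Type*} [Field 𝕜]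
    [NeZero (2 : 𝕜)] [AddCommGroup M] [Module 𝕜 M] {Q : QuadraticForm 𝕜 M} [AddCommGroup B]
    [Module 𝕜 B] [Fintype κ] (v : κ → M) {f : κ → Module.End 𝕜 B}
    (hf : ∀ a b, f a * f b + f b * f a = 0) :
    kalkmanOperator Q v f ^ (Fintype.card κ + 1) = 0 :=
  TensorProduct.sum_map_pow_card_add_one_eq_zero _ f hf

open CliffordAlgebra in
/-- non-commutative Kalkman/Mathai–Quillen conjugation identity.
On `Cl(𝔤) ⊗ B`, the operator `N(w ⊗ b) = ∑_a (x_a·ε(w)) ⊗ ι_a(b)` is nilpotent, the Kalkman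
map `φ = exp(N)` is an invertible linear map, and `φ ∘ I_a ∘ φ⁻¹ = J_a`, where
`I_a(w ⊗ b) = (x_a w − ε(w) x_a) ⊗ b + ε(w) ⊗ ι_a(b)` is the total contraction and
`J_a(w ⊗ b) = (x_a w − ε(w) x_a) ⊗ b`. -/
theorem kalkman_conjugation
    {n : ℕ} {g : Type*} [AddCommGroup g] [Module ℝ g]
    -- the inner product, as a symmetric bilinear form
    (ip : LinearMap.BilinForm ℝ g)
    (ip_symm : ∀ v w : g, ip v w = ip w v)
    -- an orthonormal basis
    (e : Module.Basis (Fin n) ℝ g)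
    (he : ∀ a b, ip (e a) (e b) = if a = b then (1 : ℝ) else 0)
    -- the quadratic form Q(v) = ½⟨v,v⟩ and its Clifford algebra
    (Q : QuadraticForm ℝ g)
    (hQ : ∀ v, Q v = (1 / 2 : ℝ) * ip v v)
    -- the Clifford generators
    (x : Fin n → CliffordAlgebra Q)
    (hx : ∀ a, x a = CliffordAlgebra.ι Q (e a))
    -- a vector space B with anticommuting contraction operators
    {B : Type*} [AddCommGroup B] [Module ℝ B]
    (ιB : Fin n → Module.End ℝ B)
    (h_ιι : ∀ a b, ιB a * ιB b + ιB b * ιB a = 0)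
    -- the operator N(w ⊗ b) = ∑_a (x_a·ε(w)) ⊗ ι_a(b)
    (N : Module.End ℝ (CliffordAlgebra Q ⊗[ℝ] B))
    (hN : N = ∑ a, TensorProduct.map
      ((LinearMap.mulLeft ℝ (x a)).comp CliffordAlgebra.involute.toLinearMap) (ιB a))
    -- the total contractions I_a and the contractions J_a on the first factor
    (I J : Fin n → Module.End ℝ (CliffordAlgebra Q ⊗[ℝ] B))
    (hI : ∀ a, I a = TensorProduct.map
        (LinearMap.mulLeft ℝ (x a)
          - (LinearMap.mulRight ℝ (x a)).comp CliffordAlgebra.involute.toLinearMap)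
        LinearMap.id
      + TensorProduct.map CliffordAlgebra.involute.toLinearMap (ιB a))
    (hJ : ∀ a, J a = TensorProduct.map
        (LinearMap.mulLeft ℝ (x a)
          - (LinearMap.mulRight ℝ (x a)).comp CliffordAlgebra.involute.toLinearMap)
        LinearMap.id) :
    IsNilpotent N ∧
    ∀ m : ℕ, N ^ m = 0 →
      IsUnit (∑ j ∈ Finset.range m, ((j.factorial : ℝ))⁻¹ • N ^ j) ∧
      ∀ a, (∑ j ∈ Finset.range m, ((j.factorial : ℝ))⁻¹ • N ^ j) * I a
        = J a * ∑ j ∈ Finset.range m, ((j.factorial : ℝ))⁻¹ • N ^ j := by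
  have hpolar : ∀ a c, QuadraticMap.polar Q (e a) (e c) = if a = c then 1 else 0 := fun a c => by
    rw [QuadraticMap.polar_eq_of_eq_half_mul_self ip_symm hQ, he]
  obtain rfl : x = fun a => ι Q (e a) := funext hx
  obtain rfl : N = kalkmanOperator Q e ιB := hN
  have hIJ : ∀ a, I a = J a + TensorProduct.map involute.toLinearMap (ιB a) := fun a => by
    rw [hI, hJ]
  refine ⟨⟨_, kalkmanOperator_pow_card_add_one_eq_zero e h_ιι⟩,
    fun m hm => ⟨?_, fun a => ?_⟩⟩
  · change IsUnit (truncExp ℝ (kalkmanOperator Q e ιB) m)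
    exact isUnit_truncExp hm
  change truncExp ℝ (kalkmanOperator Q e ιB) m * _ = _ * truncExp ℝ (kalkmanOperator Q e ιB) m
  rw [hIJ, hJ]
  exact truncExp_mul_add_eq_mul_truncExp (commute_map_involute_kalkmanOperator e h_ιι a)
    (map_oddCommutator_mul_kalkmanOperator hpolar ιB a) hm
end
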